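/- Let (η_t)_{t≥1} be any positive non-decreasing sequence of learning rates. Fix a sequence of request patterns (x_i)_{i≥1}, a time t ≥ 1, and two distinct feasible cache configurations s, s' ∈ S. For the FTPL coded caching policy with learning rates (η_t), the probability over the Gaussian perturbation γ that the selections satisfy s_t(γ) = s' and s_{t+1}(γ) = s is at most (1/√(2π)) · ( r_max/η_{t+1} + (1/η_t − 1/η_{t+1}) · t · r_max ). -/
import Mathlib
open MeasureTheory ProbabilityTheory
noncomputable section
namespace CodedCaching
/-- The finite set of feasible cache configurations: binary vectors (entries in `{0,1}`)
with at least `M` ones. -/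
def configs (N M : ℕ) : Finset (Fin N → ℕ) :=
  (Fintype.piFinset fun _ : Fin N => Finset.range 2).filter fun s => M ≤ ∑ i, s i

/-- The finite set of request patterns: `ℕ`-valued vectors whose entries sum to `K`. -/
def requests (N K : ℕ) : Finset (Fin N → ℕ) :=
  (Fintype.piFinset fun _ : Fin N => Finset.range (K + 1)).filter fun x => ∑ i, x i = K

/-- The truncated request vector `y = min(x, 1_N)`, viewed as a real vector. -/
def trunc {N : ℕ} (x : Fin N → ℕ) : Fin N → ℝ := fun i => (min (x i) 1 : ℕ)

/-- The coded part of the expected transmission rate: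
`(⟨s,1⟩/M − 1)·(1 − (1 − M/⟨s,1⟩)^⟨x,s⟩)`. -/
def codedRate {N : ℕ} (M : ℕ) (s x : Fin N → ℕ) : ℝ :=
  ((∑ i, (s i : ℝ)) / M - 1) *
    (1 - (1 - (M : ℝ) / ∑ i, (s i : ℝ)) ^ (∑ i, x i * s i))

/-- The expected transmission rate `K(s,x) = ⟨1_N − s, y⟩ + codedRate`. -/
def rate {N : ℕ} (M : ℕ) (s x : Fin N → ℕ) : ℝ :=
  (∑ i, (1 - (s i : ℝ)) * trunc x i) + codedRate M s x

/-- The common component value of the vector `f(x,s)`: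
`(1/M)·(1 − (1 − M/⟨s,1⟩)^⟨x,s⟩)`. -/
def fcomp {N : ℕ} (M : ℕ) (x s : Fin N → ℕ) : ℝ :=
  (1 / M) * (1 - (1 - (M : ℝ) / ∑ i, (s i : ℝ)) ^ (∑ i, x i * s i))

/-- `r_max`: the maximum of the rate over feasible configurations and request patterns. -/
def rmax (N K M : ℕ) : ℝ :=
  sSup {r : ℝ | ∃ s ∈ configs N M, ∃ x ∈ requests N K, r = rate M s x}

/-- `r_max^C`: the maximum of the coded rate over feasible configurations and requests. -/
def rmaxC (N K M : ℕ) : ℝ :=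
  sSup {r : ℝ | ∃ s ∈ configs N M, ∃ x ∈ requests N K, r = codedRate M s x}

/-- The standard Gaussian measure `N(0, I_N)` on `ℝ^N`. -/
def gauss (N : ℕ) : Measure (Fin N → ℝ) :=
  Measure.pi fun _ => gaussianReal 0 1

/-- The Gaussian width constant `G_max = E_γ[max_{s ∈ S} ⟨s, γ⟩]`. -/
def gmax (N M : ℕ) : ℝ :=
  ∫ γ, sSup {r : ℝ | ∃ s ∈ configs N M, r = ∑ i, (s i : ℝ) * γ i} ∂gauss N

/-- The FTPL objective at time `t` with learning rate `η` and perturbation `γ`: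
`⟨ s − (M/N)·1_N , ∑_{i=1}^{t−1} f(x_i, s) − Y_t + η·γ ⟩` where `Y_t = ∑_{i=1}^{t−1} y_i`. -/
def obj {N : ℕ} (M : ℕ) (x : ℕ → Fin N → ℕ) (η : ℝ) (t : ℕ)
    (γ : Fin N → ℝ) (s : Fin N → ℕ) : ℝ :=
  ∑ j, ((s j : ℝ) - (M : ℝ) / N) *
    ((∑ i ∈ Finset.Ico 1 t, fcomp M (x i) s)
      - (∑ i ∈ Finset.Ico 1 t, trunc (x i) j) + η * γ j)

/-- The FTPL policy: a measurable selection `σ t γ` of a minimizer of the perturbed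
cumulative cost over the feasible configurations, for learning-rate schedule `η`. -/
def IsFTPL {N : ℕ} (M : ℕ) (η : ℕ → ℝ) (x : ℕ → Fin N → ℕ)
    (σ : ℕ → (Fin N → ℝ) → Fin N → ℕ) : Prop :=
  (∀ t, Measurable (σ t)) ∧ (∀ t γ, σ t γ ∈ configs N M) ∧
    ∀ t γ, ∀ s ∈ configs N M, obj M x (η t) t γ (σ t γ) ≤ obj M x (η t) t γ s

/-- The regret of a (randomly perturbed) policy `σ` on the request sequence `x`
over horizon `T`, with respect to the best static configuration in hindsight. -/
def regret {N : ℕ} (M : ℕ) (x : ℕ → Fin N → ℕ)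
    (σ : ℕ → (Fin N → ℝ) → Fin N → ℕ) (T : ℕ) : ℝ :=
  (∑ t ∈ Finset.Icc 1 T, ∫ γ, rate M (σ t γ) (x t) ∂gauss N)
    - sInf {r : ℝ | ∃ s ∈ configs N M, r = ∑ t ∈ Finset.Icc 1 T, rate M s (x t)}

/-- The expected number of cache-configuration switches of the policy `σ` up to time `T`. -/
def switchCount {N : ℕ} (σ : ℕ → (Fin N → ℝ) → Fin N → ℕ) (T : ℕ) : ℝ :=
  ∫ γ, (∑ t ∈ Finset.Icc 1 (T - 1), if σ (t + 1) γ = σ t γ then (0 : ℝ) else 1) ∂gauss N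


lemma gaussianReal_Icc_le (p q : ℝ) :
    gaussianReal 0 1 (Set.Icc p q) ≤ ENNReal.ofReal ((q - p) / Real.sqrt (2 * Real.pi)) := by
  rw [gaussianReal_apply 0 one_ne_zero]
  have hb : ∀ x : ℝ, gaussianPDF 0 1 x ≤ ENNReal.ofReal (Real.sqrt (2 * Real.pi))⁻¹ := by
    intro x
    refine ENNReal.ofReal_le_ofReal ?_
    unfold gaussianPDFReal
    simp only [NNReal.coe_one, mul_one, sub_zero]
    have h1 : Real.exp (-x ^ 2 / 2) ≤ 1 := by
      rw [Real.exp_le_one_iff]; nlinarith [sq_nonneg x]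
    have h2 : (0:ℝ) ≤ (Real.sqrt (2 * Real.pi))⁻¹ := by positivity
    calc (Real.sqrt (2 * Real.pi))⁻¹ * Real.exp (-x ^ 2 / 2)
        ≤ (Real.sqrt (2 * Real.pi))⁻¹ * 1 := by nlinarith
      _ = (Real.sqrt (2 * Real.pi))⁻¹ := mul_one _
  calc ∫⁻ x in Set.Icc p q, gaussianPDF 0 1 x
      ≤ ∫⁻ _ in Set.Icc p q, ENNReal.ofReal (Real.sqrt (2 * Real.pi))⁻¹ :=
        lintegral_mono fun x => hb x
    _ = ENNReal.ofReal (Real.sqrt (2 * Real.pi))⁻¹ * volume (Set.Icc p q) :=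
        setLIntegral_const _ _
    _ = ENNReal.ofReal (Real.sqrt (2 * Real.pi))⁻¹ * ENNReal.ofReal (q - p) := by
        rw [Real.volume_Icc]
    _ = ENNReal.ofReal ((q - p) / Real.sqrt (2 * Real.pi)) := by
        rw [← ENNReal.ofReal_mul (by positivity)]
        congr 1; rw [div_eq_inv_mul]

lemma gaussianReal_slab_le (w c a b : ℝ) (hw : |w| = 1) :
    gaussianReal 0 1 {r : ℝ | w * r + c ∈ Set.Icc a b}
      ≤ ENNReal.ofReal ((b - a) / Real.sqrt (2 * Real.pi)) := by
  rcases abs_eq (by norm_num : (0:ℝ) ≤ 1) |>.mp hw with h1 | h1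
  · have : {r : ℝ | w * r + c ∈ Set.Icc a b} = Set.Icc (a - c) (b - c) := by
      ext r
      simp only [h1, Set.mem_Icc, Set.mem_setOf_eq, one_mul]
      constructor <;> (intro h; exact ⟨by linarith [h.1], by linarith [h.2]⟩)
    rw [this]
    simpa using gaussianReal_Icc_le (a - c) (b - c)
  · have : {r : ℝ | w * r + c ∈ Set.Icc a b} = Set.Icc (c - b) (c - a) := by
      ext r
      simp only [h1, Set.mem_Icc, Set.mem_setOf_eq, neg_one_mul]
      constructor <;> (intro h; exact ⟨by linarith [h.1], by linarith [h.2]⟩)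
    rw [this]
    simpa using gaussianReal_Icc_le (c - b) (c - a)

lemma gauss_slab {N : ℕ} (v : Fin N → ℝ) (i0 : Fin N) (hv : |v i0| = 1) (a b : ℝ) :
    gauss N {γ | (∑ j, v j * γ j) ∈ Set.Icc a b}
      ≤ ENNReal.ofReal ((b - a) / Real.sqrt (2 * Real.pi)) := by
  classical
  set S : Set (Fin N → ℝ) := {γ | (∑ j, v j * γ j) ∈ Set.Icc a b} with hS
  have hsum : Measurable fun γ : Fin N → ℝ => ∑ j, v j * γ j :=
    Finset.measurable_sum Finset.univ fun j _ => (measurable_pi_apply j).const_mul _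
  have hSm : MeasurableSet S := hsum measurableSet_Icc
  have hind : Measurable (S.indicator (1 : (Fin N → ℝ) → ENNReal)) :=
    measurable_const.indicator hSm
  have h1 : gauss N S = ∫⁻ γ, S.indicator 1 γ ∂(Measure.pi fun _ : Fin N => gaussianReal 0 1) :=
    (lintegral_indicator_one hSm).symm
  rw [h1, lintegral_eq_lmarginal_univ (0 : Fin N → ℝ),
    lmarginal_erase' _ hind (Finset.mem_univ i0)]
  have hupd : ∀ (x : Fin N → ℝ) (r : ℝ),
      ∑ j, v j * (Function.update x i0 r) j
        = v i0 * r + ∑ j ∈ Finset.univ.erase i0, v j * x j := by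
    intro x r
    rw [← Finset.add_sum_erase Finset.univ _ (Finset.mem_univ i0)]
    congr 1
    · rw [Function.update_self]
    · exact Finset.sum_congr rfl fun j hj => by
        rw [Function.update_of_ne (Finset.ne_of_mem_erase hj)]
  have hinner : ∀ x : Fin N → ℝ,
      (∫⁻ r, S.indicator 1 (Function.update x i0 r) ∂gaussianReal 0 1)
        ≤ ENNReal.ofReal ((b - a) / Real.sqrt (2 * Real.pi)) := by
    intro x
    set c := ∑ j ∈ Finset.univ.erase i0, v j * x j with hc
    have hmem : ∀ r : ℝ, Function.update x i0 r ∈ S ↔ v i0 * r + c ∈ Set.Icc a b := by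
      intro r
      rw [hS]
      simp only [Set.mem_setOf_eq, hupd x r, hc]
    have heq : ∀ r : ℝ, S.indicator (1 : (Fin N → ℝ) → ENNReal) (Function.update x i0 r)
        = ({r : ℝ | v i0 * r + c ∈ Set.Icc a b}).indicator (1 : ℝ → ENNReal) r := by
      intro r
      by_cases h : v i0 * r + c ∈ Set.Icc a b
      · rw [Set.indicator_of_mem ((hmem r).mpr h),
          Set.indicator_of_mem (show r ∈ {r : ℝ | v i0 * r + c ∈ Set.Icc a b} from h)]
        rfl
      · rw [Set.indicator_of_notMem (fun hx => h ((hmem r).mp hx)),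
          Set.indicator_of_notMem (show r ∉ {r : ℝ | v i0 * r + c ∈ Set.Icc a b} from h)]
    have hBm : MeasurableSet {r : ℝ | v i0 * r + c ∈ Set.Icc a b} :=
      ((measurable_id.const_mul _).add_const _) measurableSet_Icc
    calc (∫⁻ r, S.indicator 1 (Function.update x i0 r) ∂gaussianReal 0 1)
        = ∫⁻ r, ({r : ℝ | v i0 * r + c ∈ Set.Icc a b}).indicator 1 r ∂gaussianReal 0 1 := by
          exact lintegral_congr heq
      _ = gaussianReal 0 1 {r : ℝ | v i0 * r + c ∈ Set.Icc a b} := lintegral_indicator_one hBm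
      _ ≤ _ := gaussianReal_slab_le (v i0) c a b hv
  refine le_trans (lmarginal_mono (f := fun x => ∫⁻ r, S.indicator 1 (Function.update x i0 r)
      ∂gaussianReal 0 1)
    (g := fun _ => ENNReal.ofReal ((b - a) / Real.sqrt (2 * Real.pi)))
    (fun x => hinner x) (0 : Fin N → ℝ)) ?_
  simp [lmarginal, lintegral_const]


lemma mem_configs_iff {N M : ℕ} {s : Fin N → ℕ} (hs : s ∈ configs N M) :
    (∀ i, s i ≤ 1) ∧ M ≤ ∑ i, s i := by
  simp only [configs, Finset.mem_filter, Fintype.mem_piFinset, Finset.mem_range] at hs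
  exact ⟨fun i => Nat.lt_succ_iff.mp (hs.1 i), hs.2⟩

lemma rate_nonneg {N M : ℕ} (hM : 0 < M) {s : Fin N → ℕ} (hs : s ∈ configs N M)
    (x : Fin N → ℕ) : 0 ≤ rate M s x := by
  obtain ⟨h01, hMs⟩ := mem_configs_iff hs
  have hMs' : (M : ℝ) ≤ ∑ i, (s i : ℝ) := by
    rw [← Nat.cast_sum]; exact_mod_cast hMs
  have hMpos : (0:ℝ) < M := by exact_mod_cast hM
  have hSpos : (0:ℝ) < ∑ i, (s i : ℝ) := lt_of_lt_of_le hMpos hMs'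
  have hq : (0:ℝ) ≤ (1 - (M : ℝ) / ∑ i, (s i : ℝ)) ^ (∑ i, x i * s i) := by
    apply pow_nonneg
    have : (M : ℝ) / ∑ i, (s i : ℝ) ≤ 1 := div_le_one_of_le₀ hMs' hSpos.le
    linarith
  have hq1 : (1 - (M : ℝ) / ∑ i, (s i : ℝ)) ^ (∑ i, x i * s i) ≤ 1 := by
    apply pow_le_one₀
    · have : (M : ℝ) / ∑ i, (s i : ℝ) ≤ 1 := div_le_one_of_le₀ hMs' hSpos.le
      linarith
    · have : (0:ℝ) < (M : ℝ) / ∑ i, (s i : ℝ) := div_pos hMpos hSpos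
      linarith
  have hcoded : 0 ≤ codedRate M s x := by
    apply mul_nonneg
    · have : (1:ℝ) ≤ (∑ i, (s i : ℝ)) / M := (one_le_div hMpos).mpr hMs'
      simpa [codedRate] using by linarith
    · linarith
  refine add_nonneg (Finset.sum_nonneg fun i _ => mul_nonneg ?_ ?_) hcoded
  · have := h01 i
    have : ((s i : ℝ)) ≤ 1 := by exact_mod_cast this
    linarith
  · simp [trunc]

lemma rate_le_rmax {N K M : ℕ} {s x : Fin N → ℕ} (hs : s ∈ configs N M)
    (hx : x ∈ requests N K) : rate M s x ≤ rmax N K M := by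
  have hset : {r : ℝ | ∃ s ∈ configs N M, ∃ x ∈ requests N K, r = rate M s x}
      = ↑((configs N M ×ˢ requests N K).image fun p => rate M p.1 p.2) := by
    ext r
    simp only [Set.mem_setOf_eq, Finset.coe_image, Set.mem_image, Finset.mem_coe,
      Finset.mem_product]
    constructor
    · rintro ⟨s, hs, x, hx, rfl⟩; exact ⟨(s, x), ⟨hs, hx⟩, rfl⟩
    · rintro ⟨⟨s, x⟩, ⟨hs, hx⟩, rfl⟩; exact ⟨s, hs, x, hx, rfl⟩
  have hr : rmax N K M = sSup {r : ℝ | ∃ s ∈ configs N M, ∃ x ∈ requests N K, r = rate M s x} :=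
    rfl
  rw [hr]
  refine le_csSup ?_ ⟨s, hs, x, hx, rfl⟩
  rw [hset]
  exact (Finset.image _ _).bddAbove

lemma exists_config {N M : ℕ} (hMN : M ≤ N) : (fun _ => 1 : Fin N → ℕ) ∈ configs N M := by
  simp [configs, Fintype.mem_piFinset, hMN]

lemma exists_request {N K : ℕ} (hN : 0 < N) :
    (fun i => if i = ⟨0, hN⟩ then K else 0 : Fin N → ℕ) ∈ requests N K := by
  simp only [requests, Finset.mem_filter, Fintype.mem_piFinset, Finset.mem_range]
  constructor
  · intro i; split <;> omega
  · simp

lemma rmax_nonneg {N K M : ℕ} (hN : 0 < N) (hM : 0 < M) (hMN : M ≤ N) :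
    0 ≤ rmax N K M :=
  le_trans (rate_nonneg hM (exists_config hMN) _)
    (rate_le_rmax (exists_config hMN) (exists_request hN))

lemma sum_step {N M : ℕ} (hN : 0 < N) (hM : 0 < M) (s x : Fin N → ℕ) :
    ∑ j, ((s j : ℝ) - (M : ℝ) / N) * (fcomp M x s - trunc x j)
      = rate M s x - (1 - (M : ℝ) / N) * ∑ j, trunc x j := by
  have hN' : (N:ℝ) ≠ 0 := Nat.cast_ne_zero.mpr hN.ne'
  have hM' : (M:ℝ) ≠ 0 := Nat.cast_ne_zero.mpr hM.ne'
  simp only [mul_sub, sub_mul, Finset.sum_sub_distrib]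
  rw [← Finset.sum_mul, ← Finset.mul_sum, ← Finset.mul_sum]
  rw [Finset.sum_const, Finset.card_univ, Fintype.card_fin, nsmul_eq_mul]
  simp only [rate, codedRate, fcomp, sub_mul, one_mul, Finset.sum_sub_distrib]
  field_simp
  ring

def ccA {N : ℕ} (M : ℕ) (x : ℕ → Fin N → ℕ) (u : ℕ) (w : Fin N → ℕ) : ℝ :=
  ∑ j, ((w j : ℝ) - (M : ℝ) / N) *
    ((∑ i ∈ Finset.Ico 1 u, fcomp M (x i) w) - ∑ i ∈ Finset.Ico 1 u, trunc (x i) j)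

lemma obj_eq {N : ℕ} (M : ℕ) (x : ℕ → Fin N → ℕ) (η' : ℝ) (u : ℕ) (γ : Fin N → ℝ)
    (w : Fin N → ℕ) :
    obj M x η' u γ w = ccA M x u w + η' * ∑ j, ((w j : ℝ) - (M : ℝ) / N) * γ j := by
  rw [obj, ccA, Finset.mul_sum, ← Finset.sum_add_distrib]
  exact Finset.sum_congr rfl fun j _ => by ring

lemma ccA_eq {N M : ℕ} (hN : 0 < N) (hM : 0 < M) (x : ℕ → Fin N → ℕ) (u : ℕ)
    (w : Fin N → ℕ) :
    ccA M x u w = ∑ i ∈ Finset.Ico 1 u,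
      (rate M w (x i) - (1 - (M : ℝ) / N) * ∑ j, trunc (x i) j) := by
  rw [ccA]
  have h : ∀ j, ((w j : ℝ) - (M : ℝ) / N) *
      ((∑ i ∈ Finset.Ico 1 u, fcomp M (x i) w) - ∑ i ∈ Finset.Ico 1 u, trunc (x i) j)
      = ∑ i ∈ Finset.Ico 1 u, ((w j : ℝ) - (M : ℝ) / N) * (fcomp M (x i) w - trunc (x i) j) := by
    intro j
    rw [← Finset.sum_sub_distrib, Finset.mul_sum]
  rw [Finset.sum_congr rfl fun j _ => h j, Finset.sum_comm]
  exact Finset.sum_congr rfl fun i _ => sum_step hN hM w (x i)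

lemma ccA_sub {N M : ℕ} (hN : 0 < N) (hM : 0 < M) (x : ℕ → Fin N → ℕ) (u : ℕ)
    (s s' : Fin N → ℕ) :
    ccA M x u s' - ccA M x u s
      = ∑ i ∈ Finset.Ico 1 u, (rate M s' (x i) - rate M s (x i)) := by
  rw [ccA_eq hN hM, ccA_eq hN hM, ← Finset.sum_sub_distrib]
  exact Finset.sum_congr rfl fun i _ => by ring

/-- Switching-probability corollary for a general positive non-decreasing learning-rate
schedule `(η_t)_{t≥1}`: for any `t ≥ 1` and distinct feasible configurations `s ≠ s'`,
the probability that `s_t(γ) = s'` and `s_{t+1}(γ) = s` is at most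
`(1/√(2π))·(r_max/η_{t+1} + (1/η_t − 1/η_{t+1})·t·r_max)`. -/
theorem ftpl_switching_prob_general_eta (N K M : ℕ)
    (hN : 0 < N) (hK : 0 < K) (hM : 0 < M) (hMN : M ≤ N)
    (η : ℕ → ℝ) (hηpos : ∀ t, 1 ≤ t → 0 < η t)
    (hηmono : ∀ t, 1 ≤ t → η t ≤ η (t + 1))
    (x : ℕ → Fin N → ℕ) (hx : ∀ t, x t ∈ requests N K)
    (σ : ℕ → (Fin N → ℝ) → Fin N → ℕ) (hσ : IsFTPL M η x σ)
    (t : ℕ) (ht : 1 ≤ t)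
    (s s' : Fin N → ℕ) (hs : s ∈ configs N M) (hs' : s' ∈ configs N M) (hne : s ≠ s') :
    gauss N {γ | σ t γ = s' ∧ σ (t + 1) γ = s}
      ≤ ENNReal.ofReal
          ((1 / Real.sqrt (2 * Real.pi)) *
            (rmax N K M / η (t + 1)
              + (1 / η t - 1 / η (t + 1)) * t * rmax N K M)) := by
  
  classical
  obtain ⟨hσm, hσS, hσmin⟩ := hσ
  have hR0 : 0 ≤ rmax N K M := rmax_nonneg hN hM hMN
  have hηt : 0 < η t := hηpos t ht
  have hηt1 : 0 < η (t + 1) := hηpos (t + 1) (le_trans ht (Nat.le_succ t))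
  have hinv : 1 / η (t + 1) ≤ 1 / η t := one_div_le_one_div_of_le hηt (hηmono t ht)
  set D : ℕ → ℝ := fun u => ∑ i ∈ Finset.Ico 1 u, (rate M s' (x i) - rate M s (x i)) with hD
  set v : Fin N → ℝ := fun j => (s j : ℝ) - (s' j : ℝ) with hv
  have hincl : {γ | σ t γ = s' ∧ σ (t + 1) γ = s} ⊆
      {γ | (∑ j, v j * γ j) ∈ Set.Icc (D t / η t) (D (t + 1) / η (t + 1))} := by
    rintro γ ⟨h1, h2⟩
    have ha := hσmin t γ s hs
    rw [h1, obj_eq, obj_eq] at ha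
    have hb := hσmin (t + 1) γ s' hs'
    rw [h2, obj_eq, obj_eq] at hb
    have hGdiff : ∀ (u : Fin N → ℕ) (u' : Fin N → ℕ),
        ∑ j, ((u j : ℝ) - (M : ℝ) / N) * γ j - ∑ j, ((u' j : ℝ) - (M : ℝ) / N) * γ j
          = ∑ j, ((u j : ℝ) - (u' j : ℝ)) * γ j := by
      intro u u'
      rw [← Finset.sum_sub_distrib]
      exact Finset.sum_congr rfl fun j _ => by ring
    have hcs1 : ccA M x (t + 1) s' - ccA M x (t + 1) s = D (t + 1) := ccA_sub hN hM x (t + 1) s s'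
    have hG : ∑ j, v j * γ j = ∑ j, ((s j : ℝ) - (s' j : ℝ)) * γ j := rfl
    constructor
    · rw [div_le_iff₀ hηt]
      have h3 := hGdiff s s'
      have h4 : ccA M x t s' - ccA M x t s = D t := ccA_sub hN hM x t s s'
      rw [hG]
      nlinarith [ha, h3, h4]
    · rw [le_div_iff₀ hηt1]
      have h3 := hGdiff s s'
      rw [hG]
      nlinarith [hb, h3, hcs1]
  obtain ⟨i0, hi0⟩ := Function.ne_iff.mp hne
  have h01s := (mem_configs_iff hs).1 i0
  have h01s' := (mem_configs_iff hs').1 i0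
  have hvabs : |v i0| = 1 := by
    rw [hv]
    rcases (by omega : (s i0 = 0 ∧ s' i0 = 1) ∨ (s i0 = 1 ∧ s' i0 = 0)) with ⟨e1, e2⟩ | ⟨e1, e2⟩ <;>
      simp [e1, e2]
  refine le_trans (measure_mono hincl) (le_trans (gauss_slab v i0 hvabs _ _) ?_)
  apply ENNReal.ofReal_le_ofReal
  have heq : (D (t + 1) / η (t + 1) - D t / η t) / Real.sqrt (2 * Real.pi)
      = (1 / Real.sqrt (2 * Real.pi)) * (D (t + 1) / η (t + 1) - D t / η t) := by ring
  rw [heq]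
  have hsq : (0:ℝ) ≤ 1 / Real.sqrt (2 * Real.pi) := by positivity
  apply mul_le_mul_of_nonneg_left ?_ hsq
  -- core real inequality
  have hDsucc : D (t + 1) = D t + (rate M s' (x t) - rate M s (x t)) := by
    rw [hD]
    exact Finset.sum_Ico_succ_top ht _
  have hrs' : rate M s' (x t) ≤ rmax N K M := rate_le_rmax hs' (hx t)
  have hrs : 0 ≤ rate M s (x t) := rate_nonneg hM hs (x t)
  have hDabs : |D t| ≤ (t : ℝ) * rmax N K M := by
    rw [hD]
    calc |∑ i ∈ Finset.Ico 1 t, (rate M s' (x i) - rate M s (x i))|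
        ≤ ∑ i ∈ Finset.Ico 1 t, |rate M s' (x i) - rate M s (x i)| :=
          Finset.abs_sum_le_sum_abs _ _
      _ ≤ ∑ _i ∈ Finset.Ico 1 t, rmax N K M := by
          refine Finset.sum_le_sum fun i _ => ?_
          have ha1 : rate M s' (x i) ≤ rmax N K M := rate_le_rmax hs' (hx i)
          have ha2 : rate M s (x i) ≤ rmax N K M := rate_le_rmax hs (hx i)
          have ha3 := rate_nonneg hM hs' (x i)
          have ha4 := rate_nonneg hM hs (x i)
          rw [abs_sub_le_iff]
          constructor <;> linarith
      _ = ((t - 1 : ℕ) : ℝ) * rmax N K M := by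
          rw [Finset.sum_const, Nat.card_Ico, nsmul_eq_mul]
      _ ≤ (t : ℝ) * rmax N K M := by
          apply mul_le_mul_of_nonneg_right _ hR0
          exact_mod_cast Nat.sub_le t 1
  have hgap : 0 ≤ 1 / η t - 1 / η (t + 1) := by linarith
  have hDlow : -D t ≤ (t : ℝ) * rmax N K M := by
    have := (abs_le.mp hDabs).1
    linarith
  have key1 : D t * (1 / η (t + 1) - 1 / η t)
      ≤ (1 / η t - 1 / η (t + 1)) * t * rmax N K M := by
    have h := mul_le_mul_of_nonneg_right hDlow hgap
    nlinarith [h]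
  have key2 : (rate M s' (x t) - rate M s (x t)) / η (t + 1) ≤ rmax N K M / η (t + 1) := by
    rw [div_le_div_iff_of_pos_right hηt1]
    linarith
  have hsplit : D (t + 1) / η (t + 1) - D t / η t
      = D t * (1 / η (t + 1) - 1 / η t)
        + (rate M s' (x t) - rate M s (x t)) / η (t + 1) := by
    rw [hDsucc]
    field_simp
    ring
  rw [hsplit]
  linarith

end CodedCaching
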